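/- arXiv:2310.04076 — 6 statements merged into one kernel-verified Lean document; each statement's English description precedes it below -/
import Mathlib

section
/- For any points a, b, c in a metric space, any real z ≥ 1, and any ε > 0, we have dist(a,b)^z ≤ (1+ε)^(z-1) · dist(a,c)^z + ((1+ε)/ε)^(z-1) · dist(b,c)^z. -/
/-!
Write `x + y = u⁻¹ (u x) + v⁻¹ (v y)` with `u = 1 + ε` and `v = (1 + ε) / ε`, whose reciprocals sum
to `1`. Convexity of `t ↦ t ^ z` on `[0, ∞)` then gives
`(x + y) ^ z ≤ u⁻¹ (u x) ^ z + v⁻¹ (v y) ^ z = u ^ (z - 1) x ^ z + v ^ (z - 1) y ^ z`,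
and the triangle inequality `dist a b ≤ dist a c + dist b c` finishes the proof.
-/

namespace Real.HolderConjugate

theorem add_rpow_le {u v x y p : ℝ} (h : u.HolderConjugate v) (hx : 0 ≤ x) (hy : 0 ≤ y)
    (hp : 1 ≤ p) : (x + y) ^ p ≤ u ^ (p - 1) * x ^ p + v ^ (p - 1) * y ^ p := by
  have weight_mul_rpow {w t : ℝ} (hw : 0 < w) (ht : 0 ≤ t) :
      w⁻¹ * (w * t) ^ p = w ^ (p - 1) * t ^ p := by
    rw [mul_rpow hw.le ht, rpow_sub_one hw.ne']
    field_simp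
  have hsplit : x + y = u⁻¹ • (u * x) + v⁻¹ • (v * y) := by
    simp only [smul_eq_mul, inv_mul_cancel_left₀ h.ne_zero, inv_mul_cancel_left₀ h.symm.ne_zero]
  calc (x + y) ^ p = (u⁻¹ • (u * x) + v⁻¹ • (v * y)) ^ p := by rw [← hsplit]
    _ ≤ u⁻¹ • (u * x) ^ p + v⁻¹ • (v * y) ^ p :=
      (convexOn_rpow hp).2 (Set.mem_Ici.2 (mul_nonneg h.nonneg hx))
        (Set.mem_Ici.2 (mul_nonneg h.symm.nonneg hy)) h.inv_nonneg h.symm.inv_nonneg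
        h.inv_add_inv_eq_one
    _ = u ^ (p - 1) * x ^ p + v ^ (p - 1) * y ^ p := by
      simp only [smul_eq_mul, weight_mul_rpow h.pos hx, weight_mul_rpow h.symm.pos hy]

end Real.HolderConjugate

theorem weak_triangle_inequality_for_powers {X : Type*} [MetricSpace X]
    (a b c : X) (z : ℝ) (hz : 1 ≤ z) (ε : ℝ) (hε : 0 < ε) :
    dist a b ^ z ≤ (1 + ε) ^ (z - 1) * dist a c ^ z +
      ((1 + ε) / ε) ^ (z - 1) * dist b c ^ z := by
  have hconj : (1 + ε).HolderConjugate ((1 + ε) / ε) :=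
    (Real.holderConjugate_iff_eq_conjExponent (by linarith)).2 (by ring)
  calc dist a b ^ z ≤ (dist a c + dist b c) ^ z :=
        Real.rpow_le_rpow dist_nonneg (dist_triangle_right a b c) (by linarith)
    _ ≤ _ := hconj.add_rpow_le dist_nonneg dist_nonneg hz
end

section
/- Let z ≥ 1 be an integer and 0 < ε ≤ 1. For real numbers 0 ≤ u ≤ (ε/(4z))·v or u ≥ (4z/ε)·v (with u,v ≥ 0), any real w with |u−v| ≤ w ≤ u+v satisfies |(u² + v²)^(z/2) − w^z| ≤ ε·(u^z + w^z). -/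
/-! Let `s` be the larger and `t` the smaller of `u`, `v`, so that `t ≤ δ s` with
`δ = ε / (4z)`. Both `√(u² + v²)` and `w` lie in `[s - t, s + t] ⊆ [(1 - δ) s, (1 + δ) s]`,
so by Bernoulli's inequality and `(1 + δ)ᶻ ≤ e^{zδ} ≤ 1 / (1 - zδ)` their `z`-th powers lie in
`[(1 - ε/4) sᶻ, (1 + ε/3) sᶻ]`. Hence they differ by at most `7ε/12 · sᶻ ≤ ε wᶻ`. -/

open Real Set

lemma one_sub_mul_le_one_sub_pow {δ : ℝ} (hδ : δ ≤ 2) (n : ℕ) :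
    1 - n * δ ≤ (1 - δ) ^ n := by
  simpa only [sub_eq_add_neg, mul_neg] using one_add_mul_le_pow (neg_le_neg hδ) n

lemma one_add_pow_le_one_add_mul {δ : ℝ} {n : ℕ} (hδ : 0 ≤ δ) (hnδ : n * δ ≤ 1 / 4) :
    (1 + δ) ^ n ≤ 1 + 4 / 3 * (n * δ) :=
  calc (1 + δ) ^ n ≤ exp δ ^ n := by
        gcongr
        linarith [add_one_le_exp δ]
    _ = exp (n * δ) := (exp_nat_mul δ n).symm
    _ ≤ 1 / (1 - n * δ) := exp_bound_div_one_sub_of_interval (by positivity) (by linarith)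
    _ ≤ 1 + 4 / 3 * (n * δ) := by
        rw [div_le_iff₀ (by linarith)]
        nlinarith [mul_nonneg hδ (Nat.cast_nonneg n : (0 : ℝ) ≤ n)]

lemma pow_mem_Icc_of_mem_Icc {δ s x : ℝ} {n : ℕ} (hδ : 0 ≤ δ) (hδ1 : δ ≤ 1)
    (hnδ : n * δ ≤ 1 / 4) (hs : 0 ≤ s) (hx : x ∈ Icc ((1 - δ) * s) ((1 + δ) * s)) :
    x ^ n ∈ Icc ((1 - n * δ) * s ^ n) ((1 + 4 / 3 * (n * δ)) * s ^ n) := by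
  have hlo : 0 ≤ (1 - δ) * s := mul_nonneg (by linarith) hs
  constructor
  · calc (1 - n * δ) * s ^ n ≤ (1 - δ) ^ n * s ^ n := by
          gcongr
          exact one_sub_mul_le_one_sub_pow (by linarith) n
      _ = ((1 - δ) * s) ^ n := (mul_pow _ _ _).symm
      _ ≤ x ^ n := pow_le_pow_left₀ hlo hx.1 n
  · calc x ^ n ≤ ((1 + δ) * s) ^ n := pow_le_pow_left₀ (hlo.trans hx.1) hx.2 n
      _ = (1 + δ) ^ n * s ^ n := mul_pow _ _ _
      _ ≤ (1 + 4 / 3 * (n * δ)) * s ^ n := by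
          gcongr
          exact one_add_pow_le_one_add_mul hδ hnδ

lemma abs_pow_sub_pow_le_of_mem_Icc {ε δ s x y : ℝ} {n : ℕ} (hδ : 0 ≤ δ) (hδ1 : δ ≤ 1)
    (hε1 : ε ≤ 1) (hnδ : 4 * (n * δ) ≤ ε) (hs : 0 ≤ s)
    (hx : x ∈ Icc ((1 - δ) * s) ((1 + δ) * s)) (hy : y ∈ Icc ((1 - δ) * s) ((1 + δ) * s)) :
    |x ^ n - y ^ n| ≤ ε * y ^ n := by
  have hnδ' : n * δ ≤ 1 / 4 := by linarith
  have hε : 0 ≤ ε := le_trans (by positivity) hnδ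
  obtain ⟨hx₁, hx₂⟩ := pow_mem_Icc_of_mem_Icc hδ hδ1 hnδ' hs hx
  obtain ⟨hy₁, hy₂⟩ := pow_mem_Icc_of_mem_Icc hδ hδ1 hnδ' hs hy
  have hsn : 0 ≤ s ^ n := pow_nonneg hs n
  have h₁ : n * δ * s ^ n ≤ ε / 4 * s ^ n := by gcongr; linarith
  have h₂ : ε * ((1 - n * δ) * s ^ n) ≤ ε * y ^ n := by gcongr
  have h₃ : 0 ≤ ε * (1 / 4 - n * δ) * s ^ n := by
    have : 0 ≤ 1 / 4 - n * δ := by linarith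
    positivity
  rw [abs_le]
  constructor <;> linarith

lemma mem_Icc_of_abs_sub_le_of_le_add {δ u v w : ℝ} (huv : u ≤ δ * v) (hw₁ : |u - v| ≤ w)
    (hw₂ : w ≤ u + v) : w ∈ Icc ((1 - δ) * v) ((1 + δ) * v) := by
  constructor
  · linarith [neg_abs_le (u - v)]
  · linarith

lemma abs_sub_le_sqrt_sq_add_sq {u v : ℝ} (hu : 0 ≤ u) (hv : 0 ≤ v) :
    |u - v| ≤ √(u ^ 2 + v ^ 2) := by
  rw [← sqrt_sq_eq_abs]
  exact sqrt_le_sqrt (by nlinarith [mul_nonneg hu hv])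

lemma sqrt_sq_add_sq_le_add {u v : ℝ} (hu : 0 ≤ u) (hv : 0 ≤ v) :
    √(u ^ 2 + v ^ 2) ≤ u + v := by
  rw [sqrt_le_left (add_nonneg hu hv)]
  nlinarith [mul_nonneg hu hv]

theorem pythagorean_proxy_scale_separated (z : ℕ) (hz : 1 ≤ z)
    (ε : ℝ) (hε : 0 < ε) (hε1 : ε ≤ 1)
    (u v w : ℝ) (hu : 0 ≤ u) (hv : 0 ≤ v)
    (hcase : u ≤ ε / (4 * z) * v ∨ (4 * z) / ε * v ≤ u)
    (hw1 : |u - v| ≤ w) (hw2 : w ≤ u + v) :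
    |(u ^ 2 + v ^ 2) ^ ((z : ℝ) / 2) - w ^ z| ≤ ε * (u ^ z + w ^ z) := by
  rw [rpow_div_two_eq_sqrt _ (by positivity), rpow_natCast]
  have hz1 : (1 : ℝ) ≤ z := by exact_mod_cast hz
  set δ := ε / (4 * z) with hδ
  have hδ0 : 0 ≤ δ := by positivity
  have hδ1 : δ ≤ 1 := by rw [hδ, div_le_one (by positivity)]; linarith
  have hzδ : 4 * (z * δ) ≤ ε := le_of_eq (by rw [hδ]; field_simp)
  have hA₁ := abs_sub_le_sqrt_sq_add_sq hu hv
  have hA₂ := sqrt_sq_add_sq_le_add hu hv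
  refine le_trans ?_ (mul_le_mul_of_nonneg_left (le_add_of_nonneg_left (pow_nonneg hu z)) hε.le)
  rcases hcase with h | h
  · exact abs_pow_sub_pow_le_of_mem_Icc hδ0 hδ1 hε1 hzδ hv
      (mem_Icc_of_abs_sub_le_of_le_add h hA₁ hA₂) (mem_Icc_of_abs_sub_le_of_le_add h hw1 hw2)
  · have h' : v ≤ δ * u :=
      calc v = δ * (4 * z / ε * v) := by rw [hδ]; field_simp
        _ ≤ δ * u := by gcongr
    rw [abs_sub_comm] at hA₁ hw1
    rw [add_comm u v] at hA₂ hw2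
    exact abs_pow_sub_pow_le_of_mem_Icc hδ0 hδ1 hε1 hzδ hu
      (mem_Icc_of_abs_sub_le_of_le_add h' hA₁ hA₂) (mem_Icc_of_abs_sub_le_of_le_add h' hw1 hw2)
end

section
/- Let p, m, c ∈ ℝ^d with m ≠ c, let q be the orthogonal projection of p onto the line through m and c, let z ≥ 1 be an integer and 0 < ε ≤ 1/2. If ‖m−q‖ ≤ (ε/(7z))·‖p−m‖, then |(‖p−m‖² + ‖m−c‖²)^(z/2) − ‖p−c‖^z| ≤ ε·‖p−c‖^z. -/
/-!
Since `p - q ⟂ c - m`, the cross term `⟪p - m, c - m⟫` of the law of cosines equals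
`⟪q - m, c - m⟫`, which is at most `‖m - q‖ ‖m - c‖ ≤ δ ‖p - m‖ ‖m - c‖` with `δ = ε / (7z)`.
By AM-GM, `‖p - c‖²` is therefore within a factor `1 ± δ` of `‖p - m‖² + ‖m - c‖²`.
Bernoulli's inequality turns this into a factor `1 - zδ = 1 - ε / 7` between the `z`-th powers,
and for `ε ≤ 1 / 2` taking square roots loses at most a factor `1 ± ε`.
-/

open RealInnerProductSpace

theorem abs_norm_sub_sq_sub_pythagorean_le {E : Type*} [NormedAddCommGroup E]
    [InnerProductSpace ℝ E] {p m c q : E} (hperp : ⟪p - q, c - m⟫ = 0) :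
    |‖p - c‖ ^ 2 - (‖p - m‖ ^ 2 + ‖m - c‖ ^ 2)| ≤ 2 * ‖m - q‖ * ‖m - c‖ := by
  have hinner : ⟪p - m, c - m⟫ = ⟪q - m, c - m⟫ := by
    rw [← sub_add_sub_cancel p q m, inner_add_left, hperp, zero_add]
  have hdefect : ‖p - c‖ ^ 2 - (‖p - m‖ ^ 2 + ‖m - c‖ ^ 2) = -2 * ⟪q - m, c - m⟫ := by
    rw [← sub_sub_sub_cancel_right p c m, norm_sub_sq_real, hinner, norm_sub_rev m c]
    ring
  rw [hdefect, abs_mul, abs_neg, abs_two, mul_assoc, norm_sub_rev m q, norm_sub_rev m c]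
  exact mul_le_mul_of_nonneg_left (abs_real_inner_le_norm _ _) zero_le_two

theorem one_sub_mul_mul_pow_le_pow {R : Type*} [CommRing R] [LinearOrder R]
    [IsStrictOrderedRing R] {a b δ : R} (n : ℕ) (ha : 0 ≤ a) (hδ : δ ≤ 1)
    (h : (1 - δ) * a ≤ b) : (1 - n * δ) * a ^ n ≤ b ^ n := by
  have hbernoulli : 1 - n * δ ≤ (1 - δ) ^ n := by
    simpa [sub_eq_add_neg] using one_add_mul_le_pow (a := -δ) (by linarith) n
  calc (1 - n * δ) * a ^ n ≤ (1 - δ) ^ n * a ^ n := by gcongr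
    _ = ((1 - δ) * a) ^ n := (mul_pow _ _ _).symm
    _ ≤ b ^ n := pow_le_pow_left₀ (mul_nonneg (by linarith) ha) h n

theorem abs_sub_le_mul_of_sq_le {u v ε : ℝ} (hu : 0 ≤ u) (hv : 0 ≤ v) (hε : 0 ≤ ε)
    (hε2 : ε ≤ 1 / 2) (huv : (1 - ε / 7) * u ^ 2 ≤ v ^ 2) (hvu : (1 - ε / 7) * v ^ 2 ≤ u ^ 2) :
    |u - v| ≤ ε * v := by
  have hlow : (1 - ε) ^ 2 ≤ 1 - ε / 7 := by nlinarith
  have hupp : 1 ≤ (1 + ε) ^ 2 * (1 - ε / 7) := by nlinarith [mul_nonneg (mul_nonneg hε hε) hε]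
  rw [abs_sub_le_iff]
  constructor
  · suffices u ≤ (1 + ε) * v by linarith
    refine (pow_le_pow_iff_left₀ hu (by positivity) two_ne_zero).mp ?_
    calc u ^ 2 ≤ (1 + ε) ^ 2 * (1 - ε / 7) * u ^ 2 := le_mul_of_one_le_left (sq_nonneg u) hupp
      _ ≤ (1 + ε) ^ 2 * v ^ 2 := by rw [mul_assoc]; gcongr
      _ = ((1 + ε) * v) ^ 2 := (mul_pow _ _ _).symm
  · suffices (1 - ε) * v ≤ u by linarith
    refine (pow_le_pow_iff_left₀ (by nlinarith) hu two_ne_zero).mp ?_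
    calc ((1 - ε) * v) ^ 2 = (1 - ε) ^ 2 * v ^ 2 := mul_pow _ _ _
      _ ≤ (1 - ε / 7) * v ^ 2 := by gcongr
      _ ≤ u ^ 2 := hvu

theorem abs_pow_sub_pow_le_of_abs_sq_sub_sq_le {x y δ ε : ℝ} (n : ℕ) (hx : 0 ≤ x) (hy : 0 ≤ y)
    (hδ : δ ≤ 1) (hnδ : n * δ ≤ ε / 7) (hε : 0 ≤ ε) (hε2 : ε ≤ 1 / 2)
    (h : |y ^ 2 - x ^ 2| ≤ δ * x ^ 2) : |x ^ n - y ^ n| ≤ ε * y ^ n := by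
  obtain ⟨hlo, hhi⟩ := abs_le.mp h
  have hxy : (1 - δ) * x ^ 2 ≤ y ^ 2 := by linarith
  have hyx : (1 - δ) * y ^ 2 ≤ x ^ 2 := by nlinarith [sq_nonneg (δ * x)]
  have hpow {a b : ℝ} (ha : 0 ≤ a) (hab : (1 - δ) * a ^ 2 ≤ b ^ 2) :
      (1 - ε / 7) * (a ^ n) ^ 2 ≤ (b ^ n) ^ 2 := by
    rw [← pow_right_comm a, ← pow_right_comm b]
    calc (1 - ε / 7) * (a ^ 2) ^ n ≤ (1 - n * δ) * (a ^ 2) ^ n := by gcongr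
      _ ≤ (b ^ 2) ^ n := one_sub_mul_mul_pow_le_pow n (sq_nonneg a) hδ hab
  exact abs_sub_le_mul_of_sq_le (pow_nonneg hx n) (pow_nonneg hy n) hε hε2
    (hpow hx hxy) (hpow hy hyx)

theorem pythagorean_proxy_near_orthogonal_general {d : ℕ}
    (p m c q : EuclideanSpace ℝ (Fin d))
    (hperp : ⟪p - q, c - m⟫ = 0)
    (z : ℕ) (hz : 1 ≤ z) (ε : ℝ) (hε : 0 < ε) (hε2 : ε ≤ 1 / 2)
    (hnear : ‖m - q‖ ≤ ε / (7 * z) * ‖p - m‖) :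
    |(‖p - m‖ ^ 2 + ‖m - c‖ ^ 2) ^ ((z : ℝ) / 2) - ‖p - c‖ ^ z|
      ≤ ε * ‖p - c‖ ^ z := by
  set δ := ε / (7 * z)
  have hz' : (1 : ℝ) ≤ z := Nat.one_le_cast.mpr hz
  have hzδ : z * δ = ε / 7 := by simp only [δ]; field_simp
  have hδ : δ ≤ 1 := by
    calc δ ≤ ε / 7 := div_le_div_of_nonneg_left hε.le (by norm_num) (by linarith)
      _ ≤ 1 := by linarith
  set S := ‖p - m‖ ^ 2 + ‖m - c‖ ^ 2
  have hdefect : |‖p - c‖ ^ 2 - √S ^ 2| ≤ δ * √S ^ 2 := by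
    rw [Real.sq_sqrt (by positivity)]
    calc _ ≤ 2 * ‖m - q‖ * ‖m - c‖ := abs_norm_sub_sq_sub_pythagorean_le hperp
      _ ≤ 2 * (δ * ‖p - m‖) * ‖m - c‖ := by gcongr
      _ = δ * (2 * ‖p - m‖ * ‖m - c‖) := by ring
      _ ≤ δ * S := by gcongr; exact two_mul_le_add_sq _ _
  rw [Real.rpow_div_two_eq_sqrt _ (by positivity), Real.rpow_natCast]
  exact abs_pow_sub_pow_le_of_abs_sq_sub_sq_le z (Real.sqrt_nonneg S) (norm_nonneg _) hδ hzδ.le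
    hε.le hε2 hdefect

theorem pythagorean_proxy_near_orthogonal {d : ℕ}
    (p m c q : EuclideanSpace ℝ (Fin d)) (hmc : m ≠ c)
    (hline : ∃ t : ℝ, q = m + t • (c - m))
    (hperp : ⟪p - q, c - m⟫ = 0)
    (z : ℕ) (hz : 1 ≤ z) (ε : ℝ) (hε : 0 < ε) (hε2 : ε ≤ 1 / 2)
    (hnear : ‖m - q‖ ≤ ε / (7 * z) * ‖p - m‖) :
    |(‖p - m‖ ^ 2 + ‖m - c‖ ^ 2) ^ ((z : ℝ) / 2) - ‖p - c‖ ^ z|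
      ≤ ε * ‖p - c‖ ^ z :=
  pythagorean_proxy_near_orthogonal_general p m c q hperp z hz ε hε hε2 hnear
end

section
/- Let p, m, c ∈ ℝ^d with m ≠ c, let q be the orthogonal projection of p onto the line through m and c, let 0 < ε ≤ 1/2 and z ≥ 1. If ‖m−q‖ ≤ (ε/(7z))·‖p−m‖, then ‖p−c‖² ≥ (1 − ε²/(49z²))·‖p−m‖². -/
/-!
Pythagoras at the foot `q`: `‖p - x‖² = ‖p - q‖² + ‖x - q‖²` for every `x` on the line, so
`‖p - c‖² ≥ ‖p - q‖² = ‖p - m‖² - ‖m - q‖² ≥ (1 - δ²) ‖p - m‖²` with `δ = ε / (7z)`.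
-/

open RealInnerProductSpace

section Foot

variable {E : Type*} [NormedAddCommGroup E] [InnerProductSpace ℝ E]

theorem norm_sub_sq_eq_add_of_inner_eq_zero {p q x u : E} (hperp : ⟪p - q, u⟫ = 0) {s : ℝ}
    (hx : x - q = s • u) : ‖p - x‖ ^ 2 = ‖p - q‖ ^ 2 + ‖x - q‖ ^ 2 := by
  have horth : ⟪p - q, x - q⟫ = 0 := by rw [hx, inner_smul_right, hperp, mul_zero]
  rw [show p - x = (p - q) - (x - q) by abel, sq, sq, sq,
    norm_sub_sq_eq_norm_sq_add_norm_sq_real horth]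

theorem one_sub_sq_mul_norm_sq_le_of_near_foot {p m c q : E} {t : ℝ} (hline : q = m + t • (c - m))
    (hperp : ⟪p - q, c - m⟫ = 0) {δ : ℝ} (hnear : ‖m - q‖ ≤ δ * ‖p - m‖) :
    (1 - δ ^ 2) * ‖p - m‖ ^ 2 ≤ ‖p - c‖ ^ 2 := by
  have hm := norm_sub_sq_eq_add_of_inner_eq_zero hperp (x := m) (s := -t) (by rw [hline]; module)
  have hc := norm_sub_sq_eq_add_of_inner_eq_zero hperp (x := c) (s := 1 - t) (by rw [hline]; module)
  have hnear_sq : ‖m - q‖ ^ 2 ≤ (δ * ‖p - m‖) ^ 2 := pow_le_pow_left₀ (norm_nonneg _) hnear 2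
  nlinarith [sq_nonneg ‖c - q‖]

end Foot

theorem dist_lower_bound_near_orthogonal_general {d : ℕ}
    (p m c q : EuclideanSpace ℝ (Fin d))
    (hline : ∃ t : ℝ, q = m + t • (c - m))
    (hperp : ⟪p - q, c - m⟫ = 0)
    (z ε : ℝ)
    (hnear : ‖m - q‖ ≤ ε / (7 * z) * ‖p - m‖) :
    (1 - ε ^ 2 / (49 * z ^ 2)) * ‖p - m‖ ^ 2 ≤ ‖p - c‖ ^ 2 := by
  obtain ⟨t, ht⟩ := hline
  have hδ : (ε / (7 * z)) ^ 2 = ε ^ 2 / (49 * z ^ 2) := by rw [div_pow, mul_pow]; norm_num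
  simpa only [hδ] using one_sub_sq_mul_norm_sq_le_of_near_foot ht hperp hnear

theorem dist_lower_bound_near_orthogonal {d : ℕ}
    (p m c q : EuclideanSpace ℝ (Fin d)) (hmc : m ≠ c)
    (hline : ∃ t : ℝ, q = m + t • (c - m))
    (hperp : ⟪p - q, c - m⟫ = 0)
    (z ε : ℝ) (hz : 1 ≤ z) (hε : 0 < ε) (hε2 : ε ≤ 1 / 2)
    (hnear : ‖m - q‖ ≤ ε / (7 * z) * ‖p - m‖) :
    (1 - ε ^ 2 / (49 * z ^ 2)) * ‖p - m‖ ^ 2 ≤ ‖p - c‖ ^ 2 :=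
  dist_lower_bound_near_orthogonal_general p m c q hline hperp z ε hnear
end

section
/- Let 𝒢 be a set of centers for points P in a metric space such that for every single candidate center c, cost(P,𝒢) − cost(P,𝒢 ∪ {c}) ≤ ε·OPT/k, where OPT is the optimal (k,z)-clustering cost. Then for every solution 𝒮 with k centers and every subset Q ⊆ P, cost(Q,𝒢) ≤ cost(Q,𝒮) + ε·OPT. -/
/-!
Fix a point `p` and let `s ∈ 𝒮` be its nearest center in `𝒮`. Adding `s` to `𝒢` lowers the
cost of `p` by at least `cost(p, 𝒢) - cost(p, 𝒮)`, and adding a center never raises the cost of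
any point. Hence `cost(Q, 𝒢) - cost(Q, 𝒮)` is at most the sum over `s ∈ 𝒮` of the gain of
adding `s` on all of `P`, and each of these `k` gains is at most `ε·OPT/k` by local stability.
-/

namespace Finset

variable {X β : Type*} [DecidableEq X]

lemma inf'_insert_le_inf' [SemilatticeInf β] (G : Finset X) (hG : G.Nonempty) (c : X)
    (f : X → β) : (insert c G).inf' (insert_nonempty c G) f ≤ G.inf' hG f :=
  le_inf' hG f fun _ hg => inf'_le f (mem_insert_of_mem hg)

variable [AddCommGroup β] [LinearOrder β] [IsOrderedAddMonoid β]

lemma inf'_sub_inf'_le_sum_sub_inf'_insert (G S : Finset X) (hG : G.Nonempty)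
    (hS : S.Nonempty) (f : X → β) :
    G.inf' hG f - S.inf' hS f ≤
      ∑ s ∈ S, (G.inf' hG f - (insert s G).inf' (insert_nonempty s G) f) := by
  obtain ⟨s, hs, hs_min⟩ := S.exists_mem_eq_inf' hS f
  have h_gain_nonneg : ∀ c ∈ S, 0 ≤ G.inf' hG f - (insert c G).inf' (insert_nonempty c G) f :=
    fun c _ => sub_nonneg.2 (inf'_insert_le_inf' G hG c f)
  calc G.inf' hG f - S.inf' hS f
      ≤ G.inf' hG f - (insert s G).inf' (insert_nonempty s G) f := by
        rw [hs_min]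
        exact sub_le_sub_left (inf'_le f (mem_insert_self s G)) _
    _ ≤ _ := single_le_sum h_gain_nonneg hs

theorem sum_inf'_le_sum_inf'_add_card_nsmul_of_insert_gain_le {P Q G S : Finset X}
    (hQ : Q ⊆ P) (hG : G.Nonempty) (hS : S.Nonempty) (d : X → X → β) (δ : β)
    (h_gain : ∀ c : X,
      ∑ p ∈ P, G.inf' hG (d p) - ∑ p ∈ P, (insert c G).inf' (insert_nonempty c G) (d p) ≤ δ) :
    ∑ p ∈ Q, G.inf' hG (d p) ≤ ∑ p ∈ Q, S.inf' hS (d p) + S.card • δ := by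
  set gain : X → X → β := fun c p =>
    G.inf' hG (d p) - (insert c G).inf' (insert_nonempty c G) (d p)
  have h_gain_nonneg : ∀ c p, 0 ≤ gain c p := fun c p =>
    sub_nonneg.2 (inf'_insert_le_inf' G hG c (d p))
  rw [← sub_le_iff_le_add', ← sum_sub_distrib]
  calc ∑ p ∈ Q, (G.inf' hG (d p) - S.inf' hS (d p))
      ≤ ∑ p ∈ Q, ∑ s ∈ S, gain s p :=
        sum_le_sum fun p _ => inf'_sub_inf'_le_sum_sub_inf'_insert G S hG hS (d p)
    _ = ∑ s ∈ S, ∑ p ∈ Q, gain s p := sum_comm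
    _ ≤ ∑ s ∈ S, ∑ p ∈ P, gain s p :=
        sum_le_sum fun s _ => sum_le_sum_of_subset_of_nonneg hQ fun p _ _ => h_gain_nonneg s p
    _ ≤ ∑ _s ∈ S, δ := sum_le_sum fun s _ => (sum_sub_distrib _ _).trans_le (h_gain s)
    _ = S.card • δ := sum_const δ

end Finset

theorem locally_stable_solution_bound_general {X : Type*} [MetricSpace X] [DecidableEq X]
    (z k : ℕ) (ε OPT : ℝ)
    (P Q : Finset X) (hQ : Q ⊆ P)
    (G S : Finset X) (hG : G.Nonempty) (hS : S.Nonempty) (hScard : S.card = k)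
    (hstable : ∀ c : X,
      (∑ p ∈ P, G.inf' hG (fun g => dist p g ^ z)) -
        (∑ p ∈ P, (insert c G).inf' (Finset.insert_nonempty c G)
          (fun g => dist p g ^ z))
        ≤ ε * OPT / k) :
    (∑ p ∈ Q, G.inf' hG (fun g => dist p g ^ z))
      ≤ (∑ p ∈ Q, S.inf' hS (fun s => dist p s ^ z)) + ε * OPT := by
  have hk : (k : ℝ) ≠ 0 := by
    rw [← hScard]
    exact_mod_cast hS.card_pos.ne'
  have h := Finset.sum_inf'_le_sum_inf'_add_card_nsmul_of_insert_gain_le hQ hG hS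
    (fun p s => dist p s ^ z) (ε * OPT / k) hstable
  rwa [hScard, nsmul_eq_mul, mul_div_cancel₀ _ hk] at h

theorem locally_stable_solution_bound {X : Type*} [MetricSpace X] [DecidableEq X]
    (z k : ℕ) (hz : 1 ≤ z) (hk : 1 ≤ k) (ε OPT : ℝ) (hε : 0 < ε)
    (P Q : Finset X) (hQ : Q ⊆ P)
    (G S : Finset X) (hG : G.Nonempty) (hS : S.Nonempty) (hScard : S.card = k)
    (hOPT : OPT = ⨅ T : {T : Finset X // T.Nonempty ∧ T.card = k},
      ∑ p ∈ P, (T : Finset X).inf' T.property.1 (fun s => dist p s ^ z))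
    (hstable : ∀ c : X,
      (∑ p ∈ P, G.inf' hG (fun g => dist p g ^ z)) -
        (∑ p ∈ P, (insert c G).inf' (Finset.insert_nonempty c G)
          (fun g => dist p g ^ z))
        ≤ ε * OPT / k) :
    (∑ p ∈ Q, G.inf' hG (fun g => dist p g ^ z))
      ≤ (∑ p ∈ Q, S.inf' hS (fun s => dist p s ^ z)) + ε * OPT :=
  locally_stable_solution_bound_general z k ε OPT P Q hQ G S hG hS hScard hstable
end

section
/- Let R be a finite set in a metric space, 𝒮 a set of centers, z ≥ 1 an integer, 0 < ε ≤ 1/2. Suppose p ∈ R satisfies dist(p,q)^z ≤ (ε/z)^z · cost(p,𝒮) for all q ∈ R, where cost(p,𝒮) = min_{s∈𝒮} dist(p,s)^z. Then for every q ∈ R: (1−2ε)·cost(p,𝒮) ≤ cost(q,𝒮) ≤ (1+2ε)·cost(p,𝒮). -/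
/-!
The cost of a point is the `z`-th power of its distance to `S`, and that distance is
1-Lipschitz. So if `dist p q ≤ (ε / z) · dist(p, S)`, the distances of `p` and `q` to `S` agree
up to a factor `1 ± ε / z`; raising to the `z`-th power, `1 - ε ≤ (1 - ε / z) ^ z` (Bernoulli)
and `(1 + ε / z) ^ z ≤ exp ε ≤ 1 / (1 - ε) ≤ 1 + 2ε` for `ε ≤ 1 / 2`.
-/

open Metric

theorem Finset.inf'_dist_pow_eq_infDist_pow {X : Type*} [MetricSpace X] (S : Finset X)
    (hS : S.Nonempty) (x : X) (n : ℕ) :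
    S.inf' hS (fun s => dist x s ^ n) = infDist x (S : Set X) ^ n := by
  obtain ⟨t, ht, hxt⟩ :=
    S.finite_toSet.isCompact.exists_infDist_eq_dist (Finset.coe_nonempty.mpr hS) x
  refine le_antisymm (S.inf'_le_of_le _ ht (by rw [hxt])) (S.le_inf' hS _ fun s hs => ?_)
  exact pow_le_pow_left₀ infDist_nonneg (infDist_le_dist_of_mem hs) n

theorem one_sub_le_one_sub_div_pow {ε : ℝ} {n : ℕ} (hn : n ≠ 0) (hε : ε ≤ 2 * n) :
    1 - ε ≤ (1 - ε / n) ^ n := by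
  have hn' : (n : ℝ) ≠ 0 := Nat.cast_ne_zero.mpr hn
  have hbernoulli := one_add_mul_le_pow (a := -(ε / n)) (by
    rw [neg_le_neg_iff, div_le_iff₀ (by positivity)]; linarith) n
  rwa [mul_neg, mul_div_cancel₀ _ hn', ← sub_eq_add_neg, ← sub_eq_add_neg] at hbernoulli

theorem one_add_div_pow_le_one_add_two_mul {ε : ℝ} (n : ℕ) (hε : 0 ≤ ε)
    (hε2 : ε ≤ 1 / 2) :
    (1 + ε / n) ^ n ≤ 1 + 2 * ε := calc
  (1 + ε / n) ^ n = (1 - -ε / n) ^ n := by ring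
  _ ≤ Real.exp ε := by
    simpa using Real.one_sub_div_pow_le_exp_neg (n := n) (t := -ε)
      (by linarith [n.cast_nonneg (α := ℝ)])
  _ ≤ 1 / (1 - ε) := Real.exp_bound_div_one_sub_of_interval hε (by linarith)
  _ ≤ 1 + 2 * ε := by
    rw [div_le_iff₀ (by linarith)]
    nlinarith

theorem pow_mem_Icc_of_abs_sub_le_div_mul {a b ε : ℝ} {n : ℕ} (hn : n ≠ 0) (hε : 0 ≤ ε)
    (hε2 : ε ≤ 1 / 2) (ha : 0 ≤ a) (hab : |b - a| ≤ ε / n * a) :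
    b ^ n ∈ Set.Icc ((1 - 2 * ε) * a ^ n) ((1 + 2 * ε) * a ^ n) := by
  obtain ⟨hb_le, hle_b⟩ := abs_sub_le_iff.mp hab
  have hn1 : (1 : ℝ) ≤ n := by exact_mod_cast Nat.one_le_iff_ne_zero.mpr hn
  have hδ : ε / n ≤ 1 / 2 := (div_le_self hε hn1).trans hε2
  have hlow : 0 ≤ (1 - ε / n) * a := mul_nonneg (by linarith) ha
  constructor
  · calc (1 - 2 * ε) * a ^ n ≤ (1 - ε) * a ^ n := by gcongr; linarith
      _ ≤ (1 - ε / n) ^ n * a ^ n := by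
        gcongr; exact one_sub_le_one_sub_div_pow hn (by linarith)
      _ = ((1 - ε / n) * a) ^ n := (mul_pow _ _ _).symm
      _ ≤ b ^ n := by gcongr; linarith
  · calc b ^ n ≤ ((1 + ε / n) * a) ^ n := by gcongr <;> linarith
      _ = (1 + ε / n) ^ n * a ^ n := mul_pow _ _ _
      _ ≤ (1 + 2 * ε) * a ^ n := by gcongr; exact one_add_div_pow_le_one_add_two_mul n hε hε2

theorem huge_range_costs_nearly_equal_general {X : Type*} [MetricSpace X]
    (z : ℕ) (hz : 1 ≤ z) (ε : ℝ) (hε : 0 < ε) (hε2 : ε ≤ 1 / 2)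
    (R S : Finset X) (hS : S.Nonempty) (p : X)
    (hhuge : ∀ q ∈ R,
      dist p q ^ z ≤ (ε / z) ^ z * S.inf' hS (fun s => dist p s ^ z)) :
    ∀ q ∈ R,
      (1 - 2 * ε) * (S.inf' hS (fun s => dist p s ^ z))
          ≤ (S.inf' hS (fun s => dist q s ^ z)) ∧
        (S.inf' hS (fun s => dist q s ^ z))
          ≤ (1 + 2 * ε) * S.inf' hS (fun s => dist p s ^ z) := by
  intro q hq
  have hz0 : z ≠ 0 := Nat.one_le_iff_ne_zero.mp hz
  simp only [Finset.inf'_dist_pow_eq_infDist_pow] at hhuge ⊢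
  have hpq : dist p q ≤ ε / z * infDist p S := by
    refine le_of_pow_le_pow_left₀ hz0 (mul_nonneg (by positivity) infDist_nonneg) ?_
    simpa only [mul_pow] using hhuge q hq
  have hcost : |infDist q S - infDist p S| ≤ ε / z * infDist p S := by
    have hlip := (lipschitz_infDist_pt (S : Set X)).dist_le_mul q p
    rw [NNReal.coe_one, one_mul, dist_comm q p, Real.dist_eq] at hlip
    exact hlip.trans hpq
  exact pow_mem_Icc_of_abs_sub_le_div_mul hz0 hε.le hε2 infDist_nonneg hcost

theorem huge_range_costs_nearly_equal {X : Type*} [MetricSpace X]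
    (z : ℕ) (hz : 1 ≤ z) (ε : ℝ) (hε : 0 < ε) (hε2 : ε ≤ 1 / 2)
    (R S : Finset X) (hS : S.Nonempty) (p : X) (hp : p ∈ R)
    (hhuge : ∀ q ∈ R,
      dist p q ^ z ≤ (ε / z) ^ z * S.inf' hS (fun s => dist p s ^ z)) :
    ∀ q ∈ R,
      (1 - 2 * ε) * (S.inf' hS (fun s => dist p s ^ z))
          ≤ (S.inf' hS (fun s => dist q s ^ z)) ∧
        (S.inf' hS (fun s => dist q s ^ z))
          ≤ (1 + 2 * ε) * S.inf' hS (fun s => dist p s ^ z) :=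
  huge_range_costs_nearly_equal_general z hz ε hε hε2 R S hS p hhuge
end
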